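/- Let κ be a singular cardinal of cofinality ω and let ⟨κ_n : n < ω⟩ be a strictly increasing sequence of regular cardinals with supremum κ. Then there exists a sequence ⟨f_α : α < κ⁺⟩ of functions in the product ∏_{n<ω}(κ_{n+1} \ κ_n) that is increasing mod finite: whenever α < β < κ⁺, we have f_α(n) < f_β(n) for all sufficiently large n. -/

import Mathlib

/-!
Fix, for every `α < κ⁺`, an injective coding `code α` of the ordinals below `α` by ordinals
below `κ`, and define by recursion on `α`
  `f α n = max κₙ (sup {f γ n + 1 | γ < α, code α γ < κₙ})`.
At most `κₙ` ordinals `γ` enter the supremum, so regularity of `κₙ₊₁` keeps `f α n < κₙ₊₁`.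
If `γ < α`, then `code α γ < κ = sup κₙ`, so `code α γ < κₙ` for all large `n`, and for those `n`
the value `f γ n` is strictly below `f α n`.
-/

universe u

open Ordinal Cardinal Set

theorem exists_injOn_mapsTo_Iio_ord {α : Ordinal.{u}} {κ : Cardinal.{u}} (h : α.card ≤ κ) :
    ∃ e : Ordinal.{u} → Ordinal.{u}, InjOn e (Iio α) ∧ MapsTo e (Iio α) (Iio κ.ord) := by
  obtain ⟨g⟩ : Nonempty (Iio α ↪ Iio κ.ord) := by
    rwa [← Cardinal.le_def, Cardinal.mk_Iio_ordinal, Cardinal.mk_Iio_ordinal, card_ord,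
      Cardinal.lift_le]
  classical
  refine ⟨fun γ => if hγ : γ ∈ Iio α then g ⟨γ, hγ⟩ else 0, fun γ hγ δ hδ hγδ => ?_,
    fun γ hγ => ?_⟩
  · simp only [dif_pos hγ, dif_pos hδ] at hγδ
    exact congrArg Subtype.val (g.injective (Subtype.ext hγδ))
  · simp only [dif_pos hγ]
    exact (g ⟨γ, hγ⟩).2

theorem mk_inter_preimage_Iio_le_of_injOn {s : Set Ordinal.{u}} {e : Ordinal.{u} → Ordinal.{u}}
    (he : InjOn e s) (ρ : Ordinal.{u}) :
    #↥(s ∩ e ⁻¹' Iio ρ) ≤ Cardinal.lift.{u + 1} ρ.card := by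
  rw [← Cardinal.mk_Iio_ordinal, ← mk_image_eq_of_injOn _ _ (he.mono inter_subset_left)]
  exact mk_le_mk_of_subset (image_subset_iff.2 inter_subset_right)

section CodedScale

variable (κn : ℕ → Cardinal.{u}) (code : Ordinal.{u} → Ordinal.{u} → Ordinal.{u})

noncomputable def codedScale (α : Ordinal.{u}) (n : ℕ) : Ordinal.{u} :=
  max (κn n).ord (⨆ γ : ↥(Iio α ∩ code α ⁻¹' Iio (κn n).ord), codedScale γ n + 1)
termination_by α
decreasing_by exact γ.2.1

theorem ord_le_codedScale (α : Ordinal.{u}) (n : ℕ) : (κn n).ord ≤ codedScale κn code α n := by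
  rw [codedScale]
  exact le_max_left _ _

theorem codedScale_lt_codedScale {α γ : Ordinal.{u}} {n : ℕ} (hγ : γ < α)
    (hcode : code α γ < (κn n).ord) : codedScale κn code γ n < codedScale κn code α n := by
  conv_rhs => rw [codedScale]
  exact (lt_iSup_add_one (fun γ : ↥(Iio α ∩ code α ⁻¹' Iio (κn n).ord) =>
    codedScale κn code γ n) ⟨γ, hγ, hcode⟩).trans_le (le_max_right _ _)

theorem codedScale_lt_ord {c : Cardinal.{u}} {n : ℕ} (hc : c.IsRegular) (hn : κn n < c)
    {o : Ordinal.{u}} (hinj : ∀ β < o, InjOn (code β) (Iio β)) :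
    ∀ α < o, codedScale κn code α n < c.ord := by
  intro α
  induction α using WellFoundedLT.induction with
  | _ α ih =>
    intro hα
    rw [codedScale]
    refine max_lt (ord_lt_ord.2 hn)
      (lift_iSup_add_one_lt_of_lt_cof ?_ fun γ => ih γ γ.2.1 (γ.2.1.trans hα))
    have hsmall := mk_inter_preimage_Iio_le_of_injOn (hinj α hα) (κn n).ord
    rw [card_ord] at hsmall
    rw [← lift_cof, hc.cof_ord]
    calc Cardinal.lift.{u} #_ ≤ Cardinal.lift.{u} (Cardinal.lift.{u + 1} (κn n)) :=
          Cardinal.lift_le.2 hsmall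
      _ < Cardinal.lift.{u + 1} c := by simpa using hn

theorem eventually_codedScale_lt {α β : Ordinal.{u}} (hκn : Monotone κn) (hαβ : α < β)
    (hcode : code β α < (⨆ n, κn n).ord) :
    ∀ᶠ n in Filter.atTop, codedScale κn code α n < codedScale κn code β n := by
  obtain ⟨N, hN⟩ := exists_lt_of_lt_ciSup (lt_ord.1 hcode)
  filter_upwards [Filter.eventually_ge_atTop N] with n hn
  exact codedScale_lt_codedScale κn code hαβ (lt_ord.2 (hN.trans_le (hκn hn)))

end CodedScale

theorem exists_increasing_mod_finite_sequence_general
    (κ : Cardinal.{0})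
    (κn : ℕ → Cardinal.{0})
    (hreg : ∀ n, (κn n).IsRegular)
    (hmono : StrictMono κn)
    (hsup : (⨆ n, κn n) = κ) :
    ∃ f : Ordinal.{0} → (ℕ → Ordinal.{0}),
      (∀ α < (Order.succ κ).ord, ∀ n : ℕ,
        (κn n).ord ≤ f α n ∧ f α n < (κn (n + 1)).ord) ∧
      (∀ α β : Ordinal.{0}, α < β → β < (Order.succ κ).ord →
        ∃ N : ℕ, ∀ n ≥ N, f α n < f β n) := by
  subst hsup
  choose! code hinj hmaps using fun α (hα : α < (Order.succ (⨆ n, κn n)).ord) =>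
    exists_injOn_mapsTo_Iio_ord (Order.lt_succ_iff.1 (lt_ord.1 hα))
  refine ⟨codedScale κn code, fun α hα n => ⟨ord_le_codedScale κn code α n, ?_⟩,
    fun α β hαβ hβ => ?_⟩
  · exact codedScale_lt_ord κn code (hreg (n + 1)) (hmono n.lt_succ_self) hinj α hα
  · exact Filter.eventually_atTop.1
      (eventually_codedScale_lt κn code hmono.monotone hαβ (hmaps β hβ hαβ))

/-- Let `κ` be a singular cardinal of cofinality `ω` and let
`⟨κ_n : n < ω⟩` be a strictly increasing sequence of regular cardinals with
supremum `κ`. Then there exists a sequence `⟨f_α : α < κ⁺⟩` of functions in the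
product `∏_{n<ω} (κ_{n+1} \ κ_n)` that is increasing mod finite: whenever
`α < β < κ⁺`, we have `f_α n < f_β n` for all sufficiently large `n`. -/
theorem exists_increasing_mod_finite_sequence
    (κ : Cardinal.{0}) (hκ : Cardinal.aleph0 < κ)
    (hcof : (κ.ord).cof = Cardinal.aleph0)
    (κn : ℕ → Cardinal.{0})
    (hreg : ∀ n, (κn n).IsRegular)
    (hmono : StrictMono κn)
    (hsup : (⨆ n, κn n) = κ) :
    ∃ f : Ordinal.{0} → (ℕ → Ordinal.{0}),
      (∀ α < (Order.succ κ).ord, ∀ n : ℕ,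
        (κn n).ord ≤ f α n ∧ f α n < (κn (n + 1)).ord) ∧
      (∀ α β : Ordinal.{0}, α < β → β < (Order.succ κ).ord →
        ∃ N : ℕ, ∀ n ≥ N, f α n < f β n) :=
  exists_increasing_mod_finite_sequence_general κ κn hreg hmono hsup
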